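/- arXiv:2511.19108 — 6 statements merged into one kernel-verified Lean document; each statement's English description precedes it below -/
import Mathlib

section
/- Let p, K be positive integers with K ≤ p, let f₁,…,f_K ∈ [0,1) be pairwise distinct, let s₁,…,s_K ∈ ℂ be nonzero, and choose c₁,…,c_K ∈ ℂ with c_k² = s_k for each k. Define x ∈ ℂ^{2p−1} by x_n = Σ_{k=1}^{K} s_k e^{2πi(n−1)f_k} for n = 1,…,2p−1, and set Z = A(f)·diag(c₁,…,c_K) ∈ ℂ^{p×K}. Then: (i) 𝓗x = Z Z^⊤; (ii) Z Z^H is a Toeplitz matrix, with (Z Z^H)_{i₁,i₂} = Σ_{k=1}^{K} |s_k| e^{2πi(i₁−i₂)f_k}; and (iii) Z has full column rank K. (Existence part of Theorem 3.1.) -/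
/-!
Entrywise, `Z Zᵀ` and `Z Zᴴ` are sums over `k` of `c_k²` resp. `c_k c̄_k = |s_k|` times a product
of two characters `e^{2πi m f_k}`, which combine to the character at `m + n` resp. `m - n`.
For the rank, the diagonal factor is invertible, and the top `K × K` block of `A(f)` is the
Vandermonde matrix of the nodes `e^{2πi f_k}`, which are distinct because `t ↦ e^{2πit}` is
injective on `[0, 1)`.
-/

open Matrix

/-- The `p × p` Hankel matrix of a vector `x ∈ ℂ^{2p-1}`:
`(𝓗x)_{i₁,i₂} = x_{i₁+i₂-1}` (1-based), i.e. `x (i₁ + i₂)` with 0-based indices. -/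
def hankelMat (p : ℕ) (x : Fin (2 * p - 1) → ℂ) : Matrix (Fin p) (Fin p) ℂ :=
  fun i j => x ⟨i.val + j.val, by have := i.isLt; have := j.isLt; omega⟩

open Complex

namespace Matrix

variable {m n α : Type*} [Fintype n]

theorem mul_diagonal_mul_transpose_mul_diagonal_apply [CommSemiring α] [DecidableEq n]
    (A : Matrix m n α) (c : n → α) (i j : m) :
    (A * diagonal c * (A * diagonal c)ᵀ) i j = ∑ k, c k ^ 2 * (A i k * A j k) := by
  rw [mul_apply]
  simp only [mul_diagonal, transpose_apply]
  exact Finset.sum_congr rfl fun k _ => by ring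

theorem mul_diagonal_mul_conjTranspose_mul_diagonal_apply [CommSemiring α] [StarRing α]
    [DecidableEq n] (A : Matrix m n α) (c : n → α) (i j : m) :
    (A * diagonal c * (A * diagonal c)ᴴ) i j =
      ∑ k, c k * star (c k) * (A i k * star (A j k)) := by
  rw [mul_apply]
  simp only [mul_diagonal, conjTranspose_apply, star_mul']
  exact Finset.sum_congr rfl fun k _ => by ring

theorem rank_of_pow_of_injective {R : Type*} [Field R] {p K : ℕ} (hKp : K ≤ p)
    {v : Fin K → R} (hv : Function.Injective v) :
    (Matrix.of fun (m : Fin p) (k : Fin K) => v k ^ (m : ℕ)).rank = K := by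
  refine le_antisymm ((rank_le_card_width _).trans (Fintype.card_fin K).le) ?_
  have hsub : (Matrix.of fun (m : Fin p) (k : Fin K) => v k ^ (m : ℕ)).submatrix
      (Fin.castLE hKp) id = (vandermonde v)ᵀ := by
    ext i k
    simp
  have hdet : IsUnit (vandermonde v)ᵀ.det := by
    rw [det_transpose, isUnit_iff_ne_zero]
    exact det_vandermonde_ne_zero_iff.mpr hv
  calc K = (vandermonde v)ᵀ.rank := by
        rw [rank_of_isUnit _ ((isUnit_iff_isUnit_det _).mpr hdet), Fintype.card_fin]
    _ ≤ _ := hsub ▸ rank_submatrix_le _ _ _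

end Matrix

theorem injOn_exp_two_pi_I_mul_Ico :
    Set.InjOn (fun t : ℝ => cexp (2 * Real.pi * I * t)) (Set.Ico 0 1) := by
  intro a ⟨ha₀, ha₁⟩ b ⟨hb₀, hb₁⟩ hab
  have h2π := Real.two_pi_pos
  have hscaled : 2 * Real.pi * a = 2 * Real.pi * b :=
    Circle.exp_injOn_Ico (a := 0) (b := 2 * Real.pi) (by simp)
      ⟨by positivity, by nlinarith⟩ ⟨by positivity, by nlinarith⟩
      (Circle.ext (by simp only [Circle.coe_exp]; convert hab using 2 <;> push_cast <;> ring))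
  exact mul_left_cancel₀ h2π.ne' hscaled

theorem exp_two_pi_I_nat_mul_mul_exp (m n : ℕ) (t : ℝ) :
    cexp (2 * Real.pi * I * m * t) * cexp (2 * Real.pi * I * n * t) =
      cexp (2 * Real.pi * I * (m + n) * t) := by
  rw [← exp_add]
  ring_nf

theorem exp_two_pi_I_nat_mul_mul_conj_exp (m n : ℕ) (t : ℝ) :
    cexp (2 * Real.pi * I * m * t) * (starRingEnd ℂ) (cexp (2 * Real.pi * I * n * t)) =
      cexp (2 * Real.pi * I * (((m : ℤ) - (n : ℤ)) : ℂ) * t) := by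
  rw [← exp_conj, ← exp_add]
  simp only [map_mul, map_ofNat, conj_ofReal, conj_I, map_natCast]
  push_cast
  ring_nf

theorem stmt1_general (p K : ℕ) (hKp : K ≤ p)
    (f : Fin K → ℝ) (hf : ∀ k, f k ∈ Set.Ico (0 : ℝ) 1) (hfinj : Function.Injective f)
    (s : Fin K → ℂ) (hs : ∀ k, s k ≠ 0)
    (c : Fin K → ℂ) (hc : ∀ k, c k ^ 2 = s k)
    (x : Fin (2 * p - 1) → ℂ)
    (hx : ∀ n, x n = ∑ k, s k * Complex.exp (2 * Real.pi * Complex.I * (n : ℂ) * (f k : ℂ)))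
    (A : Matrix (Fin p) (Fin K) ℂ)
    (hA : ∀ m k, A m k = Complex.exp (2 * Real.pi * Complex.I * (m : ℂ) * (f k : ℂ)))
    (Z : Matrix (Fin p) (Fin K) ℂ) (hZ : Z = A * Matrix.diagonal c) :
    hankelMat p x = Z * Zᵀ ∧
    (∀ i₁ i₂ : Fin p, (Z * Zᴴ) i₁ i₂ =
      ∑ k, (‖s k‖ : ℂ) *
        Complex.exp (2 * Real.pi * Complex.I * (((i₁ : ℤ) - (i₂ : ℤ)) : ℂ) * (f k : ℂ))) ∧
    (∀ i₁ i₂ j₁ j₂ : Fin p, (i₁ : ℤ) - (i₂ : ℤ) = (j₁ : ℤ) - (j₂ : ℤ) →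
      (Z * Zᴴ) i₁ i₂ = (Z * Zᴴ) j₁ j₂) ∧
    Z.rank = K := by
  subst hZ
  have hnorm : ∀ k, c k * (starRingEnd ℂ) (c k) = (‖s k‖ : ℂ) := fun k => by
    rw [mul_conj', ← hc, norm_pow, ofReal_pow]
  have toeplitz : ∀ i₁ i₂ : Fin p, (A * diagonal c * (A * diagonal c)ᴴ) i₁ i₂ =
      ∑ k, (‖s k‖ : ℂ) *
        cexp (2 * Real.pi * I * (((i₁ : ℤ) - (i₂ : ℤ)) : ℂ) * (f k : ℂ)) := fun i₁ i₂ => by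
    rw [mul_diagonal_mul_conjTranspose_mul_diagonal_apply]
    simp only [hnorm, hA, RCLike.star_def, exp_two_pi_I_nat_mul_mul_conj_exp]
  refine ⟨?_, toeplitz, fun i₁ i₂ j₁ j₂ h => by simp only [toeplitz, ← Int.cast_sub, h], ?_⟩
  · ext i j
    rw [mul_diagonal_mul_transpose_mul_diagonal_apply]
    simp only [hankelMat, hx, hc, hA, exp_two_pi_I_nat_mul_mul_exp, Nat.cast_add]
  · have hc0 : ∀ k, c k ≠ 0 := fun k h => hs k (by rw [← hc k, h, zero_pow two_ne_zero])
    rw [rank_mul_eq_left_of_isUnit_det _ _ (by simpa [Finset.prod_ne_zero_iff] using hc0)]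
    have hApow : A = of fun (m : Fin p) k => cexp (2 * Real.pi * I * f k) ^ (m : ℕ) := by
      ext m k
      rw [hA, of_apply, ← exp_nat_mul]
      ring_nf
    rw [hApow]
    exact rank_of_pow_of_injective hKp
      fun a b h => hfinj (injOn_exp_two_pi_I_mul_Ico (hf a) (hf b) h)

/-- Existence part of Theorem 3.1: with `Z = A(f) diag(c)`, `c_k² = s_k`, one has
`𝓗x = Z Zᵀ`, `Z Zᴴ` is Toeplitz with entries `Σ_k |s_k| e^{2πi(i₁-i₂)f_k}`,
and `Z` has full column rank `K`. -/
theorem stmt1 (p K : ℕ) (hp : 0 < p) (hK : 0 < K) (hKp : K ≤ p)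
    (f : Fin K → ℝ) (hf : ∀ k, f k ∈ Set.Ico (0 : ℝ) 1) (hfinj : Function.Injective f)
    (s : Fin K → ℂ) (hs : ∀ k, s k ≠ 0)
    (c : Fin K → ℂ) (hc : ∀ k, c k ^ 2 = s k)
    (x : Fin (2 * p - 1) → ℂ)
    (hx : ∀ n, x n = ∑ k, s k * Complex.exp (2 * Real.pi * Complex.I * (n : ℂ) * (f k : ℂ)))
    (A : Matrix (Fin p) (Fin K) ℂ)
    (hA : ∀ m k, A m k = Complex.exp (2 * Real.pi * Complex.I * (m : ℂ) * (f k : ℂ)))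
    (Z : Matrix (Fin p) (Fin K) ℂ) (hZ : Z = A * Matrix.diagonal c) :
    hankelMat p x = Z * Zᵀ ∧
    (∀ i₁ i₂ : Fin p, (Z * Zᴴ) i₁ i₂ =
      ∑ k, (‖s k‖ : ℂ) *
        Complex.exp (2 * Real.pi * Complex.I * (((i₁ : ℤ) - (i₂ : ℤ)) : ℂ) * (f k : ℂ))) ∧
    (∀ i₁ i₂ j₁ j₂ : Fin p, (i₁ : ℤ) - (i₂ : ℤ) = (j₁ : ℤ) - (j₂ : ℤ) →
      (Z * Zᴴ) i₁ i₂ = (Z * Zᴴ) j₁ j₂) ∧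
    Z.rank = K :=
  stmt1_general p K hKp f hf hfinj s hs c hc x hx A hA Z hZ
end

section
/- Let p, K be positive integers with K < p, let f₁,…,f_K ∈ [0,1) be pairwise distinct and s₁,…,s_K ∈ ℂ be nonzero. Define x ∈ ℂ^{2p−1} by x_n = Σ_{k=1}^{K} s_k e^{2πi(n−1)f_k}, and define T ∈ ℂ^{p×p} by T_{i₁,i₂} = Σ_{k=1}^{K} |s_k| e^{2πi(i₁−i₂)f_k}. Then T is a Hermitian Toeplitz matrix, and the 2p×2p block matrix [[conj(T), conj(𝓗x)], [𝓗x, T]] is positive semidefinite of rank exactly K. (One direction of the low-rank PSD Hankel–Toeplitz characterization of spectral-sparse signals used in equation (2.4) and Theorem 3.1.) -/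
/-!
With `c k` a square root of `s k` and `z k = e^{2πi f k}`, let `G` be the `p × K` matrix with
columns `c k • (1, z k, …, z k ^ (p - 1))`. Since `|z k| = 1`, `T = G Gᴴ` and `𝓗x = G Gᵀ`, so the
block matrix is `A Aᴴ` for `A = [conj G; G]`: it is positive semidefinite with the rank of `A`.
That rank is `K`, because the first `K` rows of `G` form `Vᵀ diag(c)` with `V` the Vandermonde
matrix of the distinct nodes `z k`.
-/

open Matrix ComplexOrder

namespace Matrix

variable {m n R : Type*}

theorem rank_eq_card_of_isUnit_submatrix [CommSemiring R] [StrongRankCondition R] [Fintype n]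
    [DecidableEq n] (A : Matrix m n R) (r : n → m) (h : IsUnit (A.submatrix r id)) :
    A.rank = Fintype.card n :=
  le_antisymm A.rank_le_card_width (rank_of_isUnit _ h ▸ rank_submatrix_le A r id)

theorem fromBlocks_eq_fromRows_mul_conjTranspose [CommRing R] [StarRing R] [Fintype n]
    (G : Matrix m n R) :
    fromBlocks ((G * Gᴴ).map (starRingEnd R)) ((G * Gᵀ).map (starRingEnd R)) (G * Gᵀ) (G * Gᴴ) =
      fromRows (G.map (starRingEnd R)) G * (fromRows (G.map (starRingEnd R)) G)ᴴ := by
  rw [conjTranspose_fromRows_eq_fromCols_conjTranspose, fromRows_mul_fromCols]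
  congr 1 <;> ext <;> simp [mul_apply, starRingEnd_apply, mul_comm]

def scaledVandermonde [Monoid R] (p : ℕ) (c z : n → R) : Matrix (Fin p) n R :=
  of fun i k => c k * z k ^ (i : ℕ)

theorem scaledVandermonde_mul_transpose_apply [CommSemiring R] [Fintype n] (p : ℕ)
    (c z : n → R) (i j : Fin p) :
    (scaledVandermonde p c z * (scaledVandermonde p c z)ᵀ) i j =
      ∑ k, c k ^ 2 * z k ^ ((i : ℕ) + j) := by
  simp only [scaledVandermonde, mul_apply, transpose_apply, of_apply]
  exact Finset.sum_congr rfl fun k _ => by ring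

theorem scaledVandermonde_mul_conjTranspose_apply [CommSemiring R] [StarRing R] [Fintype n]
    (p : ℕ) (c z : n → R) (i j : Fin p) :
    (scaledVandermonde p c z * (scaledVandermonde p c z)ᴴ) i j =
      ∑ k, c k * star (c k) * (z k ^ (i : ℕ) * star (z k) ^ (j : ℕ)) := by
  simp only [scaledVandermonde, mul_apply, conjTranspose_apply, of_apply, star_mul', star_pow]
  exact Finset.sum_congr rfl fun k _ => by ring

theorem scaledVandermonde_submatrix_castLE [CommRing R] {K p : ℕ} (h : K ≤ p)
    (c z : Fin K → R) :
    (scaledVandermonde p c z).submatrix (Fin.castLE h) id = (vandermonde z)ᵀ * diagonal c := by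
  ext i k
  simp [scaledVandermonde, vandermonde_apply, mul_comm]

theorem isUnit_scaledVandermonde_submatrix_castLE [Field R] {K p : ℕ} (h : K ≤ p)
    {c z : Fin K → R} (hc : ∀ k, c k ≠ 0) (hz : Function.Injective z) :
    IsUnit ((scaledVandermonde p c z).submatrix (Fin.castLE h) id) := by
  rw [scaledVandermonde_submatrix_castLE, isUnit_iff_isUnit_det, det_mul, det_transpose,
    det_diagonal, isUnit_iff_ne_zero]
  exact mul_ne_zero (det_vandermonde_ne_zero_iff.mpr hz)
    (Finset.prod_ne_zero_iff.mpr fun k _ => hc k)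

theorem rank_fromRows_scaledVandermonde [Field R] {K p : ℕ} (h : K ≤ p) (B : Matrix m (Fin K) R)
    {c z : Fin K → R} (hc : ∀ k, c k ≠ 0) (hz : Function.Injective z) :
    (fromRows B (scaledVandermonde p c z)).rank = K := by
  simpa using rank_eq_card_of_isUnit_submatrix _ (Sum.inr ∘ Fin.castLE h)
    (isUnit_scaledVandermonde_submatrix_castLE h hc hz)

end Matrix

open Complex Real

theorem injective_exp_two_pi_mul_I {ι : Type*} {f : ι → ℝ} (hf : ∀ k, f k ∈ Set.Ico 0 1)
    (hinj : Function.Injective f) : Function.Injective fun k => cexp (2 * π * I * f k) := by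
  intro k l hkl
  have hmem : ∀ k, 2 * π * f k ∈ Set.Ico 0 (2 * π) := fun k => by
    obtain ⟨h0, h1⟩ := hf k
    exact ⟨by positivity, by nlinarith [pi_pos]⟩
  have := Circle.exp_injOn_Ico (by simp) (hmem k) (hmem l) <| Circle.ext <| by
    simpa [Circle.coe_exp, mul_comm, mul_left_comm] using hkl
  exact hinj (mul_left_cancel₀ (by positivity) this)

theorem exp_two_pi_mul_I_pow (t : ℝ) (n : ℕ) :
    cexp (2 * π * I * t) ^ n = cexp (2 * π * I * (n : ℂ) * t) := by
  rw [← Complex.exp_nat_mul]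
  ring_nf

theorem exp_two_pi_mul_I_pow_mul_conj_pow (t : ℝ) (i j : ℕ) :
    cexp (2 * π * I * t) ^ i * star (cexp (2 * π * I * t)) ^ j =
      cexp (2 * π * I * (((i : ℤ) - (j : ℤ)) : ℂ) * t) := by
  rw [star_def, ← exp_conj, ← Complex.exp_nat_mul, ← Complex.exp_nat_mul, ← Complex.exp_add]
  congr 1
  simp only [map_mul, map_ofNat, conj_ofReal, conj_I]
  push_cast
  ring

theorem stmt2_general (p K : ℕ) (hKp : K < p)
    (f : Fin K → ℝ) (hf : ∀ k, f k ∈ Set.Ico (0 : ℝ) 1) (hfinj : Function.Injective f)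
    (s : Fin K → ℂ) (hs : ∀ k, s k ≠ 0)
    (x : Fin (2 * p - 1) → ℂ)
    (hx : ∀ n, x n = ∑ k, s k * Complex.exp (2 * Real.pi * Complex.I * (n : ℂ) * (f k : ℂ)))
    (T : Matrix (Fin p) (Fin p) ℂ)
    (hT : ∀ i₁ i₂, T i₁ i₂ = ∑ k, ((‖s k‖ : ℝ) : ℂ) *
        Complex.exp (2 * Real.pi * Complex.I * (((i₁ : ℤ) - (i₂ : ℤ)) : ℂ) * (f k : ℂ))) :
    T.IsHermitian ∧
    (∀ i₁ i₂ j₁ j₂ : Fin p, (i₁ : ℤ) - (i₂ : ℤ) = (j₁ : ℤ) - (j₂ : ℤ) → T i₁ i₂ = T j₁ j₂) ∧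
    (Matrix.fromBlocks (T.map (starRingEnd ℂ)) ((hankelMat p x).map (starRingEnd ℂ))
        (hankelMat p x) T).PosSemidef ∧
    (Matrix.fromBlocks (T.map (starRingEnd ℂ)) ((hankelMat p x).map (starRingEnd ℂ))
        (hankelMat p x) T).rank = K := by
  choose c hc using fun k => IsAlgClosed.exists_pow_nat_eq (s k) two_pos
  set G := scaledVandermonde p c fun k => cexp (2 * π * I * f k)
  have hTG : T = G * Gᴴ := by
    ext i j
    rw [hT, scaledVandermonde_mul_conjTranspose_apply]
    refine Finset.sum_congr rfl fun k _ => ?_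
    rw [exp_two_pi_mul_I_pow_mul_conj_pow, star_def, mul_conj', ← ofReal_pow, ← norm_pow, hc]
  have hHG : hankelMat p x = G * Gᵀ := by
    ext i j
    rw [scaledVandermonde_mul_transpose_apply, hankelMat, hx]
    refine Finset.sum_congr rfl fun k _ => ?_
    rw [hc, exp_two_pi_mul_I_pow]
  refine ⟨hTG ▸ isHermitian_mul_conjTranspose_self G, fun i₁ i₂ j₁ j₂ h => ?_, ?_, ?_⟩
  · rw [hT, hT, ← Int.cast_sub, ← Int.cast_sub, h]
  all_goals rw [hTG, hHG, fromBlocks_eq_fromRows_mul_conjTranspose]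
  · exact posSemidef_self_mul_conjTranspose _
  · have hc0 : ∀ k, c k ≠ 0 := fun k hk => hs k (by rw [← hc k, hk, zero_pow two_ne_zero])
    rw [rank_self_mul_conjTranspose,
      rank_fromRows_scaledVandermonde hKp.le _ hc0 (injective_exp_two_pi_mul_I hf hfinj)]

/-- One direction of the low-rank PSD Hankel–Toeplitz characterization of
spectral-sparse signals: `T` is a Hermitian Toeplitz matrix and the block matrix
`[[conj T, conj (𝓗x)], [𝓗x, T]]` is positive semidefinite of rank exactly `K`. -/
theorem stmt2 (p K : ℕ) (hp : 0 < p) (hK : 0 < K) (hKp : K < p)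
    (f : Fin K → ℝ) (hf : ∀ k, f k ∈ Set.Ico (0 : ℝ) 1) (hfinj : Function.Injective f)
    (s : Fin K → ℂ) (hs : ∀ k, s k ≠ 0)
    (x : Fin (2 * p - 1) → ℂ)
    (hx : ∀ n, x n = ∑ k, s k * Complex.exp (2 * Real.pi * Complex.I * (n : ℂ) * (f k : ℂ)))
    (T : Matrix (Fin p) (Fin p) ℂ)
    (hT : ∀ i₁ i₂, T i₁ i₂ = ∑ k, ((‖s k‖ : ℝ) : ℂ) *
        Complex.exp (2 * Real.pi * Complex.I * (((i₁ : ℤ) - (i₂ : ℤ)) : ℂ) * (f k : ℂ))) :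
    T.IsHermitian ∧
    (∀ i₁ i₂ j₁ j₂ : Fin p, (i₁ : ℤ) - (i₂ : ℤ) = (j₁ : ℤ) - (j₂ : ℤ) → T i₁ i₂ = T j₁ j₂) ∧
    (Matrix.fromBlocks (T.map (starRingEnd ℂ)) ((hankelMat p x).map (starRingEnd ℂ))
        (hankelMat p x) T).PosSemidef ∧
    (Matrix.fromBlocks (T.map (starRingEnd ℂ)) ((hankelMat p x).map (starRingEnd ℂ))
        (hankelMat p x) T).rank = K :=
  stmt2_general p K hKp f hf hfinj s hs x hx T hT
end

section
/- Let p, K be positive integers, Z, ξ, ζ ∈ ℂ^{p×K}, and let O ∈ ℝ^{K×K} be real orthogonal. Then tr( Re{(ZO)^H (ZO)} · Re{(ξO)^H (ζO)} ) = tr( Re{Z^H Z} · Re{ξ^H ζ} ). (Invariance of the Riemannian metric g̃ on the total space under the right action of the real orthogonal group, which makes the metric descend to the quotient.) -/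
open Matrix

section RealAction

variable {l m n : Type*}

lemma conjTranspose_map_ofReal (O : Matrix m n ℝ) :
    (O.map Complex.ofReal)ᴴ = Oᵀ.map Complex.ofReal := by
  ext i j
  simp [conjTranspose_apply]

variable [Fintype m]

lemma map_re_ofReal_mul (O : Matrix l m ℝ) (M : Matrix m n ℂ) :
    (O.map Complex.ofReal * M).map Complex.re = O * M.map Complex.re := by
  ext i j
  simp [mul_apply, Complex.re_sum]

lemma map_re_mul_ofReal (M : Matrix l m ℂ) (O : Matrix m n ℝ) :
    (M * O.map Complex.ofReal).map Complex.re = M.map Complex.re * O := by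
  ext i j
  simp [mul_apply, Complex.re_sum]

variable [Fintype l]

lemma conjTranspose_mul_ofReal_mul_mul_ofReal (Z W : Matrix l m ℂ) (O : Matrix m n ℝ) :
    (Z * O.map Complex.ofReal)ᴴ * (W * O.map Complex.ofReal) =
      Oᵀ.map Complex.ofReal * (Zᴴ * W) * O.map Complex.ofReal := by
  simp only [conjTranspose_mul, conjTranspose_map_ofReal, Matrix.mul_assoc]

lemma map_re_conjTranspose_mul_ofReal_mul_mul_ofReal (Z W : Matrix l m ℂ) (O : Matrix m n ℝ) :
    ((Z * O.map Complex.ofReal)ᴴ * (W * O.map Complex.ofReal)).map Complex.re =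
      Oᵀ * (Zᴴ * W).map Complex.re * O := by
  rw [conjTranspose_mul_ofReal_mul_mul_ofReal, map_re_mul_ofReal, map_re_ofReal_mul]

end RealAction

lemma trace_conj_mul_conj_of_mul_transpose_eq_one {n R : Type*} [Fintype n] [DecidableEq n]
    [CommRing R] (A B O : Matrix n n R) (hO : O * Oᵀ = 1) :
    trace (Oᵀ * A * O * (Oᵀ * B * O)) = trace (A * B) := by
  have hcancel : Oᵀ * A * O * (Oᵀ * B * O) = Oᵀ * (A * B * O) := by
    simp only [Matrix.mul_assoc, ← Matrix.mul_assoc O Oᵀ, hO, Matrix.one_mul]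
  rw [hcancel, trace_mul_comm, Matrix.mul_assoc, hO, Matrix.mul_one]

theorem stmt5_general (p K : ℕ)
    (Z ξ ζ : Matrix (Fin p) (Fin K) ℂ)
    (O : Matrix (Fin K) (Fin K) ℝ) (hO₁ : O * Oᵀ = 1) :
    Matrix.trace
      ((((Z * O.map Complex.ofReal)ᴴ * (Z * O.map Complex.ofReal)).map Complex.re) *
        (((ξ * O.map Complex.ofReal)ᴴ * (ζ * O.map Complex.ofReal)).map Complex.re)) =
    Matrix.trace (((Zᴴ * Z).map Complex.re) * ((ξᴴ * ζ).map Complex.re)) := by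
  rw [map_re_conjTranspose_mul_ofReal_mul_mul_ofReal,
    map_re_conjTranspose_mul_ofReal_mul_mul_ofReal,
    trace_conj_mul_conj_of_mul_transpose_eq_one _ _ _ hO₁]

/-- Invariance of the Riemannian metric
`g̃_Z(ξ, ζ) = tr( Re{Zᴴ Z} · Re{ξᴴ ζ} )` on the total space under the right action of
the real orthogonal group. -/
theorem stmt5 (p K : ℕ) (hp : 0 < p) (hK : 0 < K)
    (Z ξ ζ : Matrix (Fin p) (Fin K) ℂ)
    (O : Matrix (Fin K) (Fin K) ℝ) (hO₁ : O * Oᵀ = 1) (hO₂ : Oᵀ * O = 1) :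
    Matrix.trace
      ((((Z * O.map Complex.ofReal)ᴴ * (Z * O.map Complex.ofReal)).map Complex.re) *
        (((ξ * O.map Complex.ofReal)ᴴ * (ζ * O.map Complex.ofReal)).map Complex.re)) =
    Matrix.trace (((Zᴴ * Z).map Complex.re) * ((ξᴴ * ζ).map Complex.re)) :=
  stmt5_general p K Z ξ ζ O hO₁
end

section
/- Let p, K be positive integers and Z, ξ ∈ ℂ^{p×K}. Then the following are equivalent: (i) tr( Re{Z^H Z} · Re{ξ^H Z} · Ω ) = 0 for every real skew-symmetric matrix Ω ∈ ℝ^{K×K}; (ii) the real matrix Re{Z^H Z} · Re{ξ^H Z} is symmetric. Moreover, for every real skew-symmetric Ω, g̃_Z(ξ, ZΩ) = tr( Re{Z^H Z} · Re{ξ^H Z} · Ω ); hence ξ is g̃_Z-orthogonal to the vertical space V_Z = { ZΩ : Ω ∈ ℝ^{K×K}, Ω^⊤ = −Ω } if and only if Re{Z^H Z}·Re{ξ^H Z} is symmetric. (Characterization of the horizontal space H_Z in equation (3.10).) -/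
open Matrix

namespace Matrix

variable {n R : Type*} [Fintype n] [CommRing R]

theorem trace_mul_eq_zero_of_isSymm_of_transpose_eq_neg [IsAddTorsionFree R]
    {M Ω : Matrix n n R} (hM : M.IsSymm) (hΩ : Ωᵀ = -Ω) : trace (M * Ω) = 0 := by
  have h : trace (M * Ω) = -trace (M * Ω) := by
    calc trace (M * Ω) = trace ((M * Ω)ᵀ) := (trace_transpose _).symm
      _ = trace (-(Ω * M)) := by rw [transpose_mul, hΩ, hM.eq, neg_mul]
      _ = -trace (M * Ω) := by rw [trace_neg, trace_mul_comm]
  exact self_eq_neg.mp h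

-- Test against the skew-symmetric matrices `Eᵢⱼ - Eⱼᵢ`.
theorem isSymm_of_forall_trace_mul_eq_zero [DecidableEq n] {M : Matrix n n R}
    (h : ∀ Ω : Matrix n n R, Ωᵀ = -Ω → trace (M * Ω) = 0) : M.IsSymm := by
  refine IsSymm.ext_iff.mpr fun i j => ?_
  have hskew : (single i j (1 : R) - single j i 1)ᵀ = -(single i j 1 - single j i 1) := by
    rw [transpose_sub, transpose_single, transpose_single, neg_sub]
  have := h _ hskew
  simp only [mul_sub, trace_sub, trace_mul_single, MulOpposite.op_one, one_smul] at this
  exact sub_eq_zero.mp this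

theorem forall_trace_mul_eq_zero_iff_isSymm [IsAddTorsionFree R] [DecidableEq n]
    (M : Matrix n n R) :
    (∀ Ω : Matrix n n R, Ωᵀ = -Ω → trace (M * Ω) = 0) ↔ M.IsSymm :=
  ⟨isSymm_of_forall_trace_mul_eq_zero,
    fun hM _ hΩ => trace_mul_eq_zero_of_isSymm_of_transpose_eq_neg hM hΩ⟩

theorem map_re_mul_map_ofReal {m : Type*} (A : Matrix m n ℂ) (Ω : Matrix n n ℝ) :
    (A * Ω.map Complex.ofReal).map Complex.re = A.map Complex.re * Ω := by
  ext i j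
  simp [mul_apply, Complex.re_sum]

end Matrix

theorem stmt7_general (p K : ℕ)
    (Z ξ : Matrix (Fin p) (Fin K) ℂ) :
    ((∀ Ω : Matrix (Fin K) (Fin K) ℝ, Ωᵀ = -Ω →
        Matrix.trace (((Zᴴ * Z).map Complex.re) * ((ξᴴ * Z).map Complex.re) * Ω) = 0) ↔
      (((Zᴴ * Z).map Complex.re) * ((ξᴴ * Z).map Complex.re)).IsSymm) ∧
    (∀ Ω : Matrix (Fin K) (Fin K) ℝ, Ωᵀ = -Ω →
      Matrix.trace (((Zᴴ * Z).map Complex.re) *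
          ((ξᴴ * (Z * Ω.map Complex.ofReal)).map Complex.re)) =
        Matrix.trace (((Zᴴ * Z).map Complex.re) * ((ξᴴ * Z).map Complex.re) * Ω)) ∧
    ((∀ Ω : Matrix (Fin K) (Fin K) ℝ, Ωᵀ = -Ω →
        Matrix.trace (((Zᴴ * Z).map Complex.re) *
          ((ξᴴ * (Z * Ω.map Complex.ofReal)).map Complex.re)) = 0) ↔
      (((Zᴴ * Z).map Complex.re) * ((ξᴴ * Z).map Complex.re)).IsSymm) := by
  have metric_eq (Ω : Matrix (Fin K) (Fin K) ℝ) :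
      trace (((Zᴴ * Z).map Complex.re) * ((ξᴴ * (Z * Ω.map Complex.ofReal)).map Complex.re)) =
        trace (((Zᴴ * Z).map Complex.re) * ((ξᴴ * Z).map Complex.re) * Ω) := by
    rw [← Matrix.mul_assoc ξᴴ, map_re_mul_map_ofReal, Matrix.mul_assoc]
  refine ⟨forall_trace_mul_eq_zero_iff_isSymm _, fun Ω _ => metric_eq Ω, ?_⟩
  simp only [metric_eq]
  exact forall_trace_mul_eq_zero_iff_isSymm _

/-- Characterization of the horizontal space `H_Z` (equation (3.10)):
(i) `tr(Re{ZᴴZ}·Re{ξᴴZ}·Ω) = 0` for all real skew-symmetric `Ω` iff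
`Re{ZᴴZ}·Re{ξᴴZ}` is symmetric; moreover `g̃_Z(ξ, ZΩ) = tr(Re{ZᴴZ}·Re{ξᴴZ}·Ω)`
for every real skew-symmetric `Ω`; hence `ξ ⟂ V_Z` iff `Re{ZᴴZ}·Re{ξᴴZ}` is symmetric. -/
theorem stmt7 (p K : ℕ) (hp : 0 < p) (hK : 0 < K)
    (Z ξ : Matrix (Fin p) (Fin K) ℂ) :
    ((∀ Ω : Matrix (Fin K) (Fin K) ℝ, Ωᵀ = -Ω →
        Matrix.trace (((Zᴴ * Z).map Complex.re) * ((ξᴴ * Z).map Complex.re) * Ω) = 0) ↔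
      (((Zᴴ * Z).map Complex.re) * ((ξᴴ * Z).map Complex.re)).IsSymm) ∧
    (∀ Ω : Matrix (Fin K) (Fin K) ℝ, Ωᵀ = -Ω →
      Matrix.trace (((Zᴴ * Z).map Complex.re) *
          ((ξᴴ * (Z * Ω.map Complex.ofReal)).map Complex.re)) =
        Matrix.trace (((Zᴴ * Z).map Complex.re) * ((ξᴴ * Z).map Complex.re) * Ω)) ∧
    ((∀ Ω : Matrix (Fin K) (Fin K) ℝ, Ωᵀ = -Ω →
        Matrix.trace (((Zᴴ * Z).map Complex.re) *
          ((ξᴴ * (Z * Ω.map Complex.ofReal)).map Complex.re)) = 0) ↔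
      (((Zᴴ * Z).map Complex.re) * ((ξᴴ * Z).map Complex.re)).IsSymm) :=
  stmt7_general p K Z ξ
end

section
/- Let p, K be positive integers, let Z ∈ ℂ^{p×K} have full column rank K, and let ξ ∈ ℂ^{p×K}. Set M = Re{Z^H Z} and Ω = ½ ( M^{-1} · Re{Z^H ξ} − Re{ξ^H Z} · M^{-1} ). Then: (i) Ω is real skew-symmetric (so ZΩ lies in the vertical space V_Z); (ii) the matrix M · Re{ (ξ − ZΩ)^H Z } is symmetric (so ξ − ZΩ lies in the horizontal space H_Z); hence ξ = (ξ − ZΩ) + ZΩ is the orthogonal decomposition of ξ into its horizontal and vertical components, and the projection of ξ onto H_Z is ξ − ZΩ. (Proposition 3.3.) -/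
/-!
Full column rank makes `ZᴴZ` positive definite, hence `M = Re{ZᴴZ}` is real symmetric positive
definite. With `A = Re{Zᴴξ}` we have `Re{ξᴴZ} = Aᵀ`, so `Ω = ½(M⁻¹A − AᵀM⁻¹)` is skew because `M⁻¹`
is symmetric, and skewness gives `Re{(ξ − ZΩ)ᴴZ} = Aᵀ + ΩM`. Multiplying by `M` cancels the
inverses: `M(Aᵀ + ΩM) = ½(MAᵀ + AM)`, which is symmetric.
-/

open Matrix
open scoped ComplexOrder

namespace Matrix

variable {m n : Type*}

lemma map_re_conjTranspose (X : Matrix m n ℂ) : Xᴴ.map Complex.re = (X.map Complex.re)ᵀ := by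
  ext i j
  simp

lemma map_re_map_ofReal_mul [Fintype n] {l : Type*} (C : Matrix m n ℝ) (D : Matrix n l ℂ) :
    (C.map Complex.ofReal * D).map Complex.re = C * D.map Complex.re := by
  ext i j
  simp [mul_apply, Complex.re_sum]

lemma conjTranspose_map_ofReal (C : Matrix m n ℝ) :
    (C.map Complex.ofReal)ᴴ = Cᵀ.map Complex.ofReal := by
  ext i j
  simp

lemma mulVec_injective_of_rank_eq_card [Fintype m] [Fintype n] {Z : Matrix m n ℂ}
    (hZ : Z.rank = Fintype.card n) : Function.Injective Z.mulVec := by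
  rw [mulVec_injective_iff, linearIndependent_iff_card_eq_finrank_span, Set.finrank,
    ← rank_eq_finrank_span_cols, hZ]

lemma IsHermitian.map_re_isSymm {A : Matrix n n ℂ} (hA : A.IsHermitian) :
    (A.map Complex.re).IsSymm := by
  rw [IsSymm, ← map_re_conjTranspose, hA.eq]

lemma PosDef.map_re [Fintype n] {A : Matrix n n ℂ} (hA : A.PosDef) :
    (A.map Complex.re).PosDef := by
  refine PosDef.of_dotProduct_mulVec_pos ?_ fun x hx => ?_
  · exact isHermitian_iff_isSymm.mpr hA.isHermitian.map_re_isSymm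
  · have hxc : (Complex.ofReal ∘ x) ≠ 0 := fun h =>
      hx <| funext fun i => Complex.ofReal_eq_zero.mp (congrFun h i)
    have hre : star x ⬝ᵥ A.map Complex.re *ᵥ x
        = (star (Complex.ofReal ∘ x) ⬝ᵥ A *ᵥ (Complex.ofReal ∘ x)).re := by
      simp [dotProduct, mulVec, Complex.re_sum, Finset.mul_sum]
    rw [hre]
    exact (Complex.pos_iff.mp (hA.dotProduct_mulVec_pos hxc)).1

lemma map_re_conjTranspose_sub_mul_map_ofReal_mul [Fintype m] [Fintype n] (Z ξ : Matrix m n ℂ)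
    (Ω : Matrix n n ℝ) :
    ((ξ - Z * Ω.map Complex.ofReal)ᴴ * Z).map Complex.re
      = (ξᴴ * Z).map Complex.re - Ωᵀ * (Zᴴ * Z).map Complex.re := by
  rw [conjTranspose_sub, conjTranspose_mul, conjTranspose_map_ofReal, Matrix.sub_mul,
    Matrix.mul_assoc, ← map_re_map_ofReal_mul]
  ext i j
  simp

section HorizontalProjection

variable [Fintype n] [DecidableEq n] {M : Matrix n n ℝ} (A : Matrix n n ℝ)

lemma transpose_half_smul_inv_mul_sub (hM : M.IsSymm) :
    ((1 / 2 : ℝ) • (M⁻¹ * A - Aᵀ * M⁻¹))ᵀ = -((1 / 2 : ℝ) • (M⁻¹ * A - Aᵀ * M⁻¹)) := by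
  rw [transpose_smul, transpose_sub, transpose_mul, transpose_mul, transpose_nonsing_inv, hM.eq,
    transpose_transpose, ← smul_neg, neg_sub]

lemma isSymm_mul_transpose_add_half_smul_inv_mul_sub_mul (hM : M.IsSymm) (hdet : IsUnit M.det) :
    (M * (Aᵀ + (1 / 2 : ℝ) • (M⁻¹ * A - Aᵀ * M⁻¹) * M)).IsSymm := by
  have h : M * (Aᵀ + (1 / 2 : ℝ) • (M⁻¹ * A - Aᵀ * M⁻¹) * M)
      = (1 / 2 : ℝ) • (M * Aᵀ + A * M) := by
    simp only [Matrix.smul_mul, Matrix.mul_add, Matrix.mul_smul, Matrix.sub_mul, Matrix.mul_sub,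
      ← Matrix.mul_assoc, mul_nonsing_inv M hdet, Matrix.one_mul]
    rw [Matrix.mul_assoc _ M⁻¹, nonsing_inv_mul M hdet, Matrix.mul_one]
    module
  rw [h, IsSymm, transpose_smul, transpose_add, transpose_mul, transpose_mul, hM.eq,
    transpose_transpose, add_comm]

end HorizontalProjection

end Matrix

theorem stmt8_general (p K : ℕ)
    (Z ξ : Matrix (Fin p) (Fin K) ℂ) (hZ : Z.rank = K)
    (M : Matrix (Fin K) (Fin K) ℝ) (hM : M = (Zᴴ * Z).map Complex.re)
    (Ω : Matrix (Fin K) (Fin K) ℝ)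
    (hΩ : Ω = (1 / 2 : ℝ) •
      (M⁻¹ * (Zᴴ * ξ).map Complex.re - (ξᴴ * Z).map Complex.re * M⁻¹)) :
    Ωᵀ = -Ω ∧ (M * (((ξ - Z * Ω.map Complex.ofReal)ᴴ * Z).map Complex.re)).IsSymm := by
  have hPD : M.PosDef := hM ▸ (PosDef.conjTranspose_mul_self Z
    (mulVec_injective_of_rank_eq_card (by rwa [Fintype.card_fin]))).map_re
  have hMsymm : M.IsSymm := isHermitian_iff_isSymm.mp hPD.isHermitian
  set A := (Zᴴ * ξ).map Complex.re
  have hA : (ξᴴ * Z).map Complex.re = Aᵀ := by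
    rw [← map_re_conjTranspose, conjTranspose_mul, conjTranspose_conjTranspose]
  rw [hA] at hΩ
  have hskew : Ωᵀ = -Ω := hΩ ▸ transpose_half_smul_inv_mul_sub A hMsymm
  refine ⟨hskew, ?_⟩
  rw [map_re_conjTranspose_sub_mul_map_ofReal_mul, hA, ← hM, hskew, neg_mul, sub_neg_eq_add, hΩ]
  exact isSymm_mul_transpose_add_half_smul_inv_mul_sub_mul A hMsymm hPD.det_pos.ne'.isUnit

/-- Proposition 3.3: with `M = Re{ZᴴZ}` and
`Ω = ½(M⁻¹·Re{Zᴴξ} − Re{ξᴴZ}·M⁻¹)`, the matrix `Ω` is real skew-symmetric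
(so `ZΩ ∈ V_Z`) and `M·Re{(ξ − ZΩ)ᴴ Z}` is symmetric (so `ξ − ZΩ ∈ H_Z`);
hence `ξ ↦ ξ − ZΩ` is the projection onto the horizontal space. -/
theorem stmt8 (p K : ℕ) (hp : 0 < p) (hK : 0 < K)
    (Z ξ : Matrix (Fin p) (Fin K) ℂ) (hZ : Z.rank = K)
    (M : Matrix (Fin K) (Fin K) ℝ) (hM : M = (Zᴴ * Z).map Complex.re)
    (Ω : Matrix (Fin K) (Fin K) ℝ)
    (hΩ : Ω = (1 / 2 : ℝ) •
      (M⁻¹ * (Zᴴ * ξ).map Complex.re - (ξᴴ * Z).map Complex.re * M⁻¹)) :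
    Ωᵀ = -Ω ∧ (M * (((ξ - Z * Ω.map Complex.ofReal)ᴴ * Z).map Complex.re)).IsSymm :=
  stmt8_general p K Z ξ hZ M hM Ω hΩ
end

section
/- Let p, K be positive integers, let Z ∈ ℂ^{p×K} have full column rank K, and let Ω ∈ ℝ^{K×K} be skew-symmetric. If the real matrix Re{Z^H Z} · Re{ (ZΩ)^H Z } is symmetric, then Ω = 0. Equivalently, the intersection of the vertical space V_Z = { ZΩ : Ω real skew-symmetric } with the horizontal space H_Z = { ξ : Re{Z^H Z}·Re{ξ^H Z} symmetric } is {0}. (Key step in the proof of Proposition 3.4.) -/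
/-!
Write `A = Re{ZᴴZ}`. Since `Ω` is real, `Re{(ZΩ)ᴴZ} = Ωᵀ A = -ΩA`, so the hypothesis says that
`AΩA` is symmetric; but `AΩA` is also skew-symmetric, hence zero. Full column rank makes `ZᴴZ`
positive definite, and then so is its real part `A`; cancelling the invertible `A` on both
sides gives `Ω = 0`.
-/

open Matrix
open scoped ComplexOrder

namespace Matrix

variable {m n k : Type*} [Fintype n]

theorem mulVec_injective_of_rank_eq_card_s9 {R : Type*} [Field R] {A : Matrix m n R}
    (h : A.rank = Fintype.card n) : Function.Injective A.mulVec := by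
  rw [mulVec_injective_iff, linearIndependent_iff_card_eq_finrank_span, ← h,
    rank_eq_finrank_span_cols]
  rfl

theorem map_re_ofReal_mul (B : Matrix m n ℝ) (C : Matrix n k ℂ) :
    (B.map Complex.ofReal * C).map Complex.re = B * C.map Complex.re := by
  ext i j
  simp [mul_apply, Complex.re_sum]

theorem map_re_conjTranspose_mul_ofReal_mul {p : Type*} [Fintype p] (Z : Matrix p n ℂ)
    (B : Matrix n m ℝ) (W : Matrix p k ℂ) :
    ((Z * B.map Complex.ofReal)ᴴ * W).map Complex.re = Bᵀ * (Zᴴ * W).map Complex.re := by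
  have hB : (B.map Complex.ofReal)ᴴ = Bᵀ.map Complex.ofReal := by
    ext i j
    simp
  rw [conjTranspose_mul, hB, Matrix.mul_assoc, map_re_ofReal_mul]

theorem PosDef.map_re_s9 {M : Matrix n n ℂ} (hM : M.PosDef) : (M.map Complex.re).PosDef := by
  refine PosDef.of_dotProduct_mulVec_pos ?_ fun x hx => ?_
  · ext i j
    simpa using congrArg Complex.re (hM.1.apply i j)
  · have hx' : (fun i => (x i : ℂ)) ≠ 0 := fun h0 =>
      hx (funext fun i => Complex.ofReal_injective (congrFun h0 i))
    have hpos := (Complex.pos_iff.mp (hM.dotProduct_mulVec_pos hx')).1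
    refine hpos.trans_eq ?_
    simp [dotProduct, mulVec, Complex.re_sum, Finset.mul_sum, Complex.mul_re]

end Matrix

theorem stmt9_general (p K : ℕ)
    (Z : Matrix (Fin p) (Fin K) ℂ) (hZ : Z.rank = K)
    (Ω : Matrix (Fin K) (Fin K) ℝ) (hΩ : Ωᵀ = -Ω)
    (h : (((Zᴴ * Z).map Complex.re) *
        (((Z * Ω.map Complex.ofReal)ᴴ * Z).map Complex.re)).IsSymm) :
    Ω = 0 := by
  set A := (Zᴴ * Z).map Complex.re
  have hA : A.PosDef :=
    (PosDef.conjTranspose_mul_self Z (mulVec_injective_of_rank_eq_card_s9 (by simpa using hZ))).map_re_s9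
  have hAsymm : Aᵀ = A := isHermitian_iff_isSymm.mp hA.1
  rw [map_re_conjTranspose_mul_ofReal_mul] at h
  change (A * (Ωᵀ * A)).IsSymm at h
  have hsymm : (A * Ω * A)ᵀ = A * Ω * A := by
    rw [hΩ, Matrix.neg_mul, Matrix.mul_neg, ← Matrix.mul_assoc] at h
    simpa only [neg_neg] using h.neg.eq
  have hskew : (A * Ω * A)ᵀ = -(A * Ω * A) := by
    rw [transpose_mul, transpose_mul, hAsymm, hΩ, Matrix.neg_mul, Matrix.mul_neg,
      Matrix.mul_assoc]
  -- `Matrix` has no `IsAddTorsionFree` instance, so argue in the underlying function type.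
  have hzero : A * Ω * A = 0 :=
    (self_eq_neg (G := Fin K → Fin K → ℝ)).mp (hsymm.symm.trans hskew)
  rwa [hA.isUnit.mul_left_eq_zero, hA.isUnit.mul_right_eq_zero] at hzero

/-- Key step in the proof of Proposition 3.4: for full-column-rank `Z`, if `Ω` is real
skew-symmetric and `Re{ZᴴZ}·Re{(ZΩ)ᴴZ}` is symmetric, then `Ω = 0`; i.e.
`V_Z ∩ H_Z = {0}`. -/
theorem stmt9 (p K : ℕ) (hp : 0 < p) (hK : 0 < K)
    (Z : Matrix (Fin p) (Fin K) ℂ) (hZ : Z.rank = K)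
    (Ω : Matrix (Fin K) (Fin K) ℝ) (hΩ : Ωᵀ = -Ω)
    (h : (((Zᴴ * Z).map Complex.re) *
        (((Z * Ω.map Complex.ofReal)ᴴ * Z).map Complex.re)).IsSymm) :
    Ω = 0 :=
  stmt9_general p K Z hZ Ω hΩ h
end
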